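/- For any two correlated policies π̃_1, π̃_2 over Π_det and any integer k ≥ 1, J^{π̃_1,k}(μ) = J^{π̃_2,k}(μ) − (1/(1−γ^k)) · E_{s ∼ d_μ^{π̃_2,k}} [ A^{π̃_1,k}(s, π̃_2) ], where A^{π̃_1,k}(s, π̃_2) = Q^{π̃_1,k}(s, π̃_2) − J^{π̃_1,k}(s) is the k-step advantage function. (k-step Performance Difference Lemma.) -/

import Mathlib

open Finset

noncomputable section

variable {S A D : Type*} [Fintype S] [Fintype A] [Fintype D] [DecidableEq S]

/-- Transition matrix of a deterministic policy `pol`. -/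
def detKernel (P : S → A → S → ℝ) (pol : S → A) : Matrix S S ℝ :=
  Matrix.of fun s s' => P s (pol s) s'

/-- Expected discounted cost incurred during the first `k` steps when following the
deterministic policy `pol` starting from state `s`. -/
def detCost (P : S → A → S → ℝ) (g : S → A → ℝ) (γ : ℝ) (pol : S → A) (k : ℕ) (s : S) : ℝ :=
  ∑ t ∈ Finset.range k, γ ^ t * ∑ s', (detKernel P pol ^ t) s s' * g s' (pol s')

/-- Value function `J^{π_det}(s)` of a deterministic policy. -/
def detJ (P : S → A → S → ℝ) (g : S → A → ℝ) (γ : ℝ) (pol : S → A) (s : S) : ℝ :=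
  ∑' t : ℕ, γ ^ t * ∑ s', (detKernel P pol ^ t) s s' * g s' (pol s')

/-- Value `J^{π_det}(μ)` of a deterministic policy from an initial distribution `μ`. -/
def detJInit (P : S → A → S → ℝ) (g : S → A → ℝ) (γ : ℝ) (pol : S → A) (μ : S → ℝ) : ℝ :=
  ∑ s, μ s * detJ P g γ pol s

/-- The `k`-step transition kernel of the correlated policy with weights `w`
over the family `p` of deterministic policies. -/
def corKernel (P : S → A → S → ℝ) (p : D → S → A) (w : D → ℝ) (k : ℕ) : Matrix S S ℝ :=
  ∑ d, w d • (detKernel P (p d) ^ k)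

/-- Expected discounted cost of one `k`-step block of the correlated policy from `s`. -/
def blockCost (P : S → A → S → ℝ) (g : S → A → ℝ) (γ : ℝ) (p : D → S → A) (w : D → ℝ)
    (k : ℕ) (s : S) : ℝ :=
  ∑ d, w d * detCost P g γ (p d) k s

/-- The `k`-step value function `J^{π̃,k}(s)` of the correlated policy `w`. -/
def Jk (P : S → A → S → ℝ) (g : S → A → ℝ) (γ : ℝ) (p : D → S → A) (w : D → ℝ)
    (k : ℕ) (s : S) : ℝ :=
  ∑' m : ℕ, γ ^ (m * k) * ∑ s', (corKernel P p w k ^ m) s s' * blockCost P g γ p w k s'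

/-- `J^{π̃,k}(μ)`. -/
def JkInit (P : S → A → S → ℝ) (g : S → A → ℝ) (γ : ℝ) (p : D → S → A) (w : D → ℝ)
    (k : ℕ) (μ : S → ℝ) : ℝ :=
  ∑ s, μ s * Jk P g γ p w k s

/-- The `k`-step Q-function `Q^{π̃,k}(s, π')` with deterministic second argument `pol`. -/
def Qk (P : S → A → S → ℝ) (g : S → A → ℝ) (γ : ℝ) (p : D → S → A) (w : D → ℝ)
    (k : ℕ) (s : S) (pol : S → A) : ℝ :=
  detCost P g γ pol k s + γ ^ k * ∑ s', (detKernel P pol ^ k) s s' * Jk P g γ p w k s'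

/-- The `k`-step Q-function `Q^{π̃,k}(s, π̃')` with correlated second argument `w'`. -/
def QkCor (P : S → A → S → ℝ) (g : S → A → ℝ) (γ : ℝ) (p : D → S → A) (w : D → ℝ)
    (k : ℕ) (s : S) (w' : D → ℝ) : ℝ :=
  ∑ d, w' d * Qk P g γ p w k s (p d)

/-- The `k`-step discounted state occupancy measure `d_μ^{π̃,k}(s)`. -/
def dOcc (P : S → A → S → ℝ) (γ : ℝ) (p : D → S → A) (w : D → ℝ) (k : ℕ)
    (μ : S → ℝ) (s : S) : ℝ :=
  (1 - γ ^ k) * ∑' m : ℕ, γ ^ (m * k) * ∑ s0, μ s0 * (corKernel P p w k ^ m) s0 s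

/-! Put `β = γ ^ k`, let `M` be the `k`-step kernel of `π̃₂` and `N = ∑ₜ βᵗ Mᵗ` its resolvent,
so that `N (1 - β M) = 1`, `J^{π̃₂,k} = N c₂` (with `c₂` the one-block cost) and
`d_μ^{π̃₂,k} = (1 - β) μ N`. The `k`-step Q-function is a one-block Bellman backup,
`Q^{π̃₁,k}(·, π̃₂) = c₂ + β M J^{π̃₁,k}`, hence the expected advantage is
`(1 - β) μ N (c₂ + β M J₁ - J₁) = (1 - β) (μ N c₂ - μ J₁) = (1 - β) (J^{π̃₂,k}(μ) - J^{π̃₁,k}(μ))`. -/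

open Matrix

section Resolvent

variable {ι m n R : Type*}

theorem Matrix.tsum_mulVec_apply [Fintype n] [NonUnitalNonAssocSemiring R] [TopologicalSpace R]
    [IsTopologicalSemiring R] [T2Space R] {f : ι → Matrix m n R} (hf : Summable f) (v : n → R)
    (i : m) : ((∑' t, f t) *ᵥ v) i = ∑' t, (f t *ᵥ v) i :=
  hf.map_tsum ((Pi.evalAddMonoidHom _ i).comp (mulVec.addMonoidHomLeft v))
    ((continuous_apply i).comp (continuous_id.matrix_mulVec continuous_const))

theorem Matrix.vecMul_tsum_apply [Fintype m] [NonUnitalNonAssocSemiring R] [TopologicalSpace R]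
    [IsTopologicalSemiring R] [T2Space R] {f : ι → Matrix m n R} (hf : Summable f) (v : m → R)
    (j : n) : (v ᵥ* ∑' t, f t) j = ∑' t, (v ᵥ* f t) j :=
  hf.map_tsum ((Pi.evalAddMonoidHom _ j).comp
      (⟨⟨(v ᵥ* ·), vecMul_zero v⟩, (vecMul_add · · v)⟩ : Matrix m n R →+ n → R))
    ((continuous_apply j).comp (continuous_const.matrix_vecMul continuous_id))

variable [Fintype n] [DecidableEq n]

theorem vecMul_dotProduct_eq_of_sub_smul_mul_eq_one [CommRing R]
    {N M : Matrix n n R} {β : R} (hN : N - β • (N * M) = 1) (μ c J : n → R) :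
    (μ ᵥ* N) ⬝ᵥ (c + β • (M *ᵥ J) - J) = μ ⬝ᵥ (N *ᵥ c) - μ ⬝ᵥ J := by
  have hNJ : N *ᵥ (β • (M *ᵥ J) - J) = -J := by
    rw [mulVec_sub, mulVec_smul, mulVec_mulVec, ← smul_mulVec, ← neg_sub, ← sub_mulVec, hN,
      one_mulVec]
  rw [← dotProduct_mulVec, add_sub_assoc, mulVec_add, hNJ, dotProduct_add, dotProduct_neg,
    sub_eq_add_neg]

def discountedResolvent (β : ℝ) (M : Matrix n n ℝ) : Matrix n n ℝ :=
  ∑' t : ℕ, β ^ t • M ^ t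

theorem summable_pow_smul_pow_of_mem_rowStochastic {M : Matrix n n ℝ}
    (hM : M ∈ rowStochastic ℝ n) {β : ℝ} (hβ0 : 0 ≤ β) (hβ1 : β < 1) :
    Summable fun t : ℕ => β ^ t • M ^ t := by
  refine Pi.summable.2 fun i => Pi.summable.2 fun j => ?_
  have hMt : ∀ t : ℕ, M ^ t ∈ rowStochastic ℝ n := fun t => pow_mem hM t
  refine (summable_geometric_of_lt_one hβ0 hβ1).of_nonneg_of_le (fun t => ?_) (fun t => ?_)
  · exact mul_nonneg (pow_nonneg hβ0 t) (nonneg_of_mem_rowStochastic (hMt t))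
  · exact mul_le_of_le_one_right (pow_nonneg hβ0 t) (le_one_of_mem_rowStochastic (hMt t))

theorem discountedResolvent_sub_smul_mul {M : Matrix n n ℝ} (hM : M ∈ rowStochastic ℝ n)
    {β : ℝ} (hβ0 : 0 ≤ β) (hβ1 : β < 1) :
    discountedResolvent β M - β • (discountedResolvent β M * M) = 1 := by
  have hsum := summable_pow_smul_pow_of_mem_rowStochastic hM hβ0 hβ1
  have hshift : β • (discountedResolvent β M * M) = ∑' t : ℕ, β ^ (t + 1) • M ^ (t + 1) := by
    rw [discountedResolvent, ← mul_smul_comm, ← hsum.tsum_mul_right]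
    refine tsum_congr fun t => ?_
    rw [smul_mul_smul_comm, pow_succ, pow_succ]
  rw [hshift, discountedResolvent, hsum.tsum_eq_zero_add]
  simp

end Resolvent

section KStep

omit [Fintype A]

variable (P : S → A → S → ℝ) (g : S → A → ℝ) (γ : ℝ) (p : D → S → A) (k : ℕ)

theorem detKernel_mem_rowStochastic (hP : ∀ s a, (∀ s', 0 ≤ P s a s') ∧ ∑ s', P s a s' = 1)
    (pol : S → A) : detKernel P pol ∈ rowStochastic ℝ S :=
  mem_rowStochastic_iff_sum.2 ⟨fun s s' => (hP s (pol s)).1 s', fun s => (hP s (pol s)).2⟩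

theorem corKernel_mem_rowStochastic (hP : ∀ s a, (∀ s', 0 ≤ P s a s') ∧ ∑ s', P s a s' = 1)
    {w : D → ℝ} (hw : w ∈ stdSimplex ℝ D) : corKernel P p w k ∈ rowStochastic ℝ S :=
  convex_rowStochastic.sum_mem (fun d _ => hw.1 d) hw.2
    fun d _ => pow_mem (detKernel_mem_rowStochastic P hP (p d)) k

variable {P γ p k}

theorem Jk_eq_discountedResolvent_mulVec {w : D → ℝ}
    (hM : corKernel P p w k ∈ rowStochastic ℝ S) (hγk0 : 0 ≤ γ ^ k) (hγk1 : γ ^ k < 1) :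
    Jk P g γ p w k = discountedResolvent (γ ^ k) (corKernel P p w k) *ᵥ blockCost P g γ p w k := by
  have hsum := summable_pow_smul_pow_of_mem_rowStochastic hM hγk0 hγk1
  ext s
  rw [discountedResolvent, tsum_mulVec_apply hsum]
  refine tsum_congr fun t => ?_
  rw [smul_mulVec, Pi.smul_apply, smul_eq_mul, mul_comm t k, pow_mul]
  rfl

theorem dOcc_eq_smul_vecMul_discountedResolvent {w : D → ℝ}
    (hM : corKernel P p w k ∈ rowStochastic ℝ S) (hγk0 : 0 ≤ γ ^ k) (hγk1 : γ ^ k < 1)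
    (μ : S → ℝ) :
    dOcc P γ p w k μ = (1 - γ ^ k) • (μ ᵥ* discountedResolvent (γ ^ k) (corKernel P p w k)) := by
  have hsum := summable_pow_smul_pow_of_mem_rowStochastic hM hγk0 hγk1
  ext s
  rw [Pi.smul_apply, smul_eq_mul, discountedResolvent, vecMul_tsum_apply hsum, dOcc]
  congr 1
  refine tsum_congr fun t => ?_
  rw [vecMul_smul, Pi.smul_apply, smul_eq_mul, mul_comm t k, pow_mul]
  rfl

theorem QkCor_eq_blockCost_add (w₁ w₂ : D → ℝ) :
    (QkCor P g γ p w₁ k · w₂) =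
      blockCost P g γ p w₂ k + γ ^ k • (corKernel P p w₂ k *ᵥ Jk P g γ p w₁ k) := by
  ext s
  simp only [QkCor, Qk, blockCost, corKernel, sum_mulVec, mul_add, sum_add_distrib, Pi.add_apply,
    Pi.smul_apply, Finset.sum_apply, smul_mulVec, smul_eq_mul, mulVec, dotProduct, Finset.mul_sum]
  congr 1
  exact sum_congr rfl fun d _ => sum_congr rfl fun s' _ => by ring

end KStep

theorem kstep_performance_difference_general
    (P : S → A → S → ℝ) (g : S → A → ℝ) (γ : ℝ) (μ : S → ℝ)
    (p : D → S → A) (w₁ w₂ : D → ℝ) (k : ℕ)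
    (hP : ∀ s a, (∀ s', 0 ≤ P s a s') ∧ ∑ s', P s a s' = 1)
    (hγ0 : 0 < γ) (hγ1 : γ < 1)
    (hw₂ : w₂ ∈ stdSimplex ℝ D)
    (hk : 1 ≤ k) :
    JkInit P g γ p w₁ k μ =
      JkInit P g γ p w₂ k μ -
        (1 / (1 - γ ^ k)) *
          ∑ s, dOcc P γ p w₂ k μ s *
            (QkCor P g γ p w₁ k s w₂ - Jk P g γ p w₁ k s) := by
  have hγk0 : 0 ≤ γ ^ k := pow_nonneg hγ0.le k
  have hγk1 : γ ^ k < 1 := pow_lt_one₀ hγ0.le hγ1 (by omega)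
  have hM := corKernel_mem_rowStochastic P p k hP hw₂
  have hadvantage : ∑ s, dOcc P γ p w₂ k μ s * (QkCor P g γ p w₁ k s w₂ - Jk P g γ p w₁ k s) =
      (1 - γ ^ k) * (JkInit P g γ p w₂ k μ - JkInit P g γ p w₁ k μ) := by
    change dOcc P γ p w₂ k μ ⬝ᵥ ((QkCor P g γ p w₁ k · w₂) - Jk P g γ p w₁ k) = _
    rw [QkCor_eq_blockCost_add, dOcc_eq_smul_vecMul_discountedResolvent hM hγk0 hγk1,
      smul_dotProduct, vecMul_dotProduct_eq_of_sub_smul_mul_eq_one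
        (discountedResolvent_sub_smul_mul hM hγk0 hγk1),
      ← Jk_eq_discountedResolvent_mulVec g hM hγk0 hγk1]
    rfl
  rw [hadvantage, one_div, inv_mul_cancel_left₀ (sub_ne_zero.2 hγk1.ne')]
  ring

/-- **k-step Performance Difference Lemma.**
For any two correlated policies `w₁, w₂` over the finite family `p` of deterministic
policies and any integer `k ≥ 1`,
`J^{π̃₁,k}(μ) = J^{π̃₂,k}(μ) − (1/(1−γ^k)) · E_{s ∼ d_μ^{π̃₂,k}}[A^{π̃₁,k}(s, π̃₂)]`,
where `A^{π̃₁,k}(s, π̃₂) = Q^{π̃₁,k}(s, π̃₂) − J^{π̃₁,k}(s)`. -/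
theorem kstep_performance_difference
    (P : S → A → S → ℝ) (g : S → A → ℝ) (γ gmax : ℝ) (μ : S → ℝ)
    (p : D → S → A) (w₁ w₂ : D → ℝ) (k : ℕ)
    (hP : ∀ s a, (∀ s', 0 ≤ P s a s') ∧ ∑ s', P s a s' = 1)
    (hg : ∀ s a, |g s a| ≤ gmax)
    (hγ0 : 0 < γ) (hγ1 : γ < 1)
    (hμ : μ ∈ stdSimplex ℝ S)
    (hw₁ : w₁ ∈ stdSimplex ℝ D) (hw₂ : w₂ ∈ stdSimplex ℝ D)
    (hk : 1 ≤ k) :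
    JkInit P g γ p w₁ k μ =
      JkInit P g γ p w₂ k μ -
        (1 / (1 - γ ^ k)) *
          ∑ s, dOcc P γ p w₂ k μ s *
            (QkCor P g γ p w₁ k s w₂ - Jk P g γ p w₁ k s) :=
  kstep_performance_difference_general P g γ μ p w₁ w₂ k hP hγ0 hγ1 hw₂ hk

end
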